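/- In the field K = ℚ(x₁,x₂) the identity F_{2,1} = 2(p² + e² − 2ep) holds, where e = x₁x₂ and p = x₁²+x₂². -/
import Mathlib


open MvPolynomial

noncomputable section

/-- The polynomial ring `ℚ[x₁,x₂]`. -/
abbrev R : Type := MvPolynomial (Fin 2) ℚ

/-- The field of rational functions `K = ℚ(x₁,x₂)`. -/
abbrev K : Type := FractionRing R

/-- The image of `x₁` in `K`. -/
def x₁ : K := algebraMap R K (X 0)

/-- The image of `x₂` in `K`. -/
def x₂ : K := algebraMap R K (X 1)

/-- The localisation expression
`F_{a,b} = (x₁x₂)^a(x₁²+x₂²)^b/(x₁x₂) + (x₁²−x₁x₂)^a(x₁²+(x₂−x₁)²)^b/(x₁²−x₁x₂)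
  + (x₂²−x₁x₂)^a(x₂²+(x₁−x₂)²)^b/(x₂²−x₁x₂)` in `K`. -/
def F (a b : ℕ) : K :=
  (x₁ * x₂) ^ a * (x₁ ^ 2 + x₂ ^ 2) ^ b / (x₁ * x₂)
    + (x₁ ^ 2 - x₁ * x₂) ^ a * (x₁ ^ 2 + (x₂ - x₁) ^ 2) ^ b / (x₁ ^ 2 - x₁ * x₂)
    + (x₂ ^ 2 - x₁ * x₂) ^ a * (x₂ ^ 2 + (x₁ - x₂) ^ 2) ^ b / (x₂ ^ 2 - x₁ * x₂)

lemma hmap : Function.Injective (algebraMap R K) :=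
  IsFractionRing.injective R K

lemma hx1 : x₁ ≠ 0 := by
  simpa [x₁, map_zero] using fun h => X_ne_zero (R := ℚ) (0 : Fin 2) (hmap (by simpa using h))

lemma hx2 : x₂ ≠ 0 := by
  simpa [x₂, map_zero] using fun h => X_ne_zero (R := ℚ) (1 : Fin 2) (hmap (by simpa using h))

lemma hne : x₁ - x₂ ≠ 0 := by
  intro h
  have : (X 0 : R) - X 1 = 0 := hmap (by simpa [x₁, x₂, map_sub] using h)
  have h2 : (X 0 : R) = X 1 := by linear_combination this
  exact (by simp : ((X 0 : R)).coeff (Finsupp.single 0 1) ≠ (X 1 : R).coeff (Finsupp.single 0 1))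
    (by rw [h2])

/-- The identity `q_{2,1} = 2(p₁² + e² − 2ep₁)` from the paper, where `e = x₁x₂` and `p = x₁² + x₂²`. -/
theorem stmt11 :
    F 2 1 = 2 * ((x₁ ^ 2 + x₂ ^ 2) ^ 2 + (x₁ * x₂) ^ 2 - 2 * (x₁ * x₂) * (x₁ ^ 2 + x₂ ^ 2)) := by
  have h1 := hx1
  have h2 := hx2
  have h3 := hne
  have d2 : x₁ ^ 2 - x₁ * x₂ ≠ 0 := by
    have : x₁ ^ 2 - x₁ * x₂ = x₁ * (x₁ - x₂) := by ring
    rw [this]; exact mul_ne_zero h1 h3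
  have d3 : x₂ ^ 2 - x₁ * x₂ ≠ 0 := by
    have : x₂ ^ 2 - x₁ * x₂ = -(x₂ * (x₁ - x₂)) := by ring
    rw [this]; exact neg_ne_zero.mpr (mul_ne_zero h2 h3)
  unfold F
  field_simp
  ring

end
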